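/- arXiv:0806.2058 — 2 statements merged into one kernel-verified Lean document; each statement's English description precedes it below -/
import Mathlib

section
/- The closure of Q in ℝ^{m₁×m₂} equals the set C defined by the corresponding weak inequalities, i.e. cl(Q) = C. -/
/-!
Scaling a point `y ∈ C` by `c ∈ [0, 1)` multiplies the `y`-terms of every inequality by `c` but
leaves the positive constants `k i i'`, `l j j'` alone, so all inequalities become strict: the open
segment from `0` to `y` lies in `Q`. As `C` is closed and contains `Q`, this gives `cl Q = C`.
-/

/-- The open domain `Q` of the obliquely reflected BSDE. -/
def gameQ (m₁ m₂ : ℕ) (k : Fin m₁ → Fin m₁ → ℝ) (l : Fin m₂ → Fin m₂ → ℝ) :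
    Set (Fin m₁ → Fin m₂ → ℝ) :=
  {y | (∀ i i' : Fin m₁, i' ≠ i → ∀ j : Fin m₂, y i j < y i' j + k i i') ∧
       (∀ j j' : Fin m₂, j' ≠ j → ∀ i : Fin m₁, y i j' - l j j' < y i j)}

/-- The set `C` defined by the corresponding weak inequalities. -/
def gameC (m₁ m₂ : ℕ) (k : Fin m₁ → Fin m₁ → ℝ) (l : Fin m₂ → Fin m₂ → ℝ) :
    Set (Fin m₁ → Fin m₂ → ℝ) :=
  {y | (∀ i i' : Fin m₁, i' ≠ i → ∀ j : Fin m₂, y i j ≤ y i' j + k i i') ∧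
       (∀ j j' : Fin m₂, j' ≠ j → ∀ i : Fin m₁, y i j' - l j j' ≤ y i j)}

section

variable {m₁ m₂ : ℕ} {k : Fin m₁ → Fin m₁ → ℝ} {l : Fin m₂ → Fin m₂ → ℝ}

theorem gameQ_subset_gameC : gameQ m₁ m₂ k l ⊆ gameC m₁ m₂ k l :=
  fun _ hy => ⟨fun i i' h j => (hy.1 i i' h j).le, fun j j' h i => (hy.2 j j' h i).le⟩

theorem isClosed_gameC : IsClosed (gameC m₁ m₂ k l) := by
  simp only [gameC, Set.ofPred_and, Set.ofPred_forall]
  refine .inter ?_ ?_ <;>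
    exact isClosed_iInter fun _ => isClosed_iInter fun _ => isClosed_iInter fun _ =>
      isClosed_iInter fun _ => isClosed_le (by fun_prop) (by fun_prop)

theorem smul_mem_gameQ (hkpos : ∀ i i', i ≠ i' → 0 < k i i')
    (hlpos : ∀ j j', j ≠ j' → 0 < l j j') {y : Fin m₁ → Fin m₂ → ℝ}
    (hy : y ∈ gameC m₁ m₂ k l) {c : ℝ} (hc₀ : 0 ≤ c) (hc₁ : c < 1) :
    c • y ∈ gameQ m₁ m₂ k l := by
  refine ⟨fun i i' h j => ?_, fun j j' h i => ?_⟩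
  · have hk := hkpos i i' h.symm
    calc c * y i j ≤ c * (y i' j + k i i') := mul_le_mul_of_nonneg_left (hy.1 i i' h j) hc₀
      _ < c * y i' j + k i i' := by nlinarith
  · have hl := hlpos j j' h.symm
    calc c * y i j' - l j j' < c * (y i j' - l j j') := by nlinarith
      _ ≤ c * y i j := mul_le_mul_of_nonneg_left (hy.2 j j' h i) hc₀

theorem openSegment_zero_subset_gameQ (hkpos : ∀ i i', i ≠ i' → 0 < k i i')
    (hlpos : ∀ j j', j ≠ j' → 0 < l j j') {y : Fin m₁ → Fin m₂ → ℝ}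
    (hy : y ∈ gameC m₁ m₂ k l) : openSegment ℝ 0 y ⊆ gameQ m₁ m₂ k l := by
  rintro _ ⟨a, b, ha, hb, hab, rfl⟩
  rw [smul_zero, zero_add]
  exact smul_mem_gameQ hkpos hlpos hy hb.le (by linarith)

end

theorem closure_gameQ_eq_gameC_general
    (m₁ m₂ : ℕ)
    (k : Fin m₁ → Fin m₁ → ℝ) (l : Fin m₂ → Fin m₂ → ℝ)
    (hkpos : ∀ i i', i ≠ i' → 0 < k i i')
    (hlpos : ∀ j j', j ≠ j' → 0 < l j j') :
    closure (gameQ m₁ m₂ k l) = gameC m₁ m₂ k l := by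
  refine (closure_minimal gameQ_subset_gameC isClosed_gameC).antisymm fun y hy => ?_
  have hy_seg : y ∈ closure (openSegment ℝ 0 y) :=
    segment_subset_closure_openSegment (right_mem_segment ℝ 0 y)
  exact closure_mono (openSegment_zero_subset_gameQ hkpos hlpos hy) hy_seg

/-- The closure of `Q` equals the set `C` defined by the weak inequalities. -/
theorem closure_gameQ_eq_gameC
    (m₁ m₂ : ℕ) (hm₁ : 1 ≤ m₁) (hm₂ : 1 ≤ m₂)
    (k : Fin m₁ → Fin m₁ → ℝ) (l : Fin m₂ → Fin m₂ → ℝ)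
    (hk0 : ∀ i, k i i = 0) (hkpos : ∀ i i', i ≠ i' → 0 < k i i')
    (hl0 : ∀ j, l j j = 0) (hlpos : ∀ j j', j ≠ j' → 0 < l j j') :
    closure (gameQ m₁ m₂ k l) = gameC m₁ m₂ k l :=
  closure_gameQ_eq_gameC_general m₁ m₂ k l hkpos hlpos
end

section
/- Let {(i_p, j_p)}_{p=0}^N be a loop whose total cost Σ_{p=1}^N [k(i_{p−1}, i_p) − l(j_{p−1}, j_p)] is nonzero. Then for every R > 0 there exists ε > 0 such that: for all matrices y⁽¹⁾, …, y⁽ᴺ⁾ ∈ ℝ^{m₁×m₂} satisfying |y⁽ᵖ⁾| ≤ R and y⁽ᵖ⁾ ∈ F_p for each p = 1, …, N, one has Σ_{p=1}^N |y⁽ᵖ⁾ − y⁽ᵖ⁻¹⁾|² ≥ ε, where y⁽⁰⁾ := y⁽ᴺ⁾. Here F_p := {y ∈ ℝ^{m₁×m₂} : y_{i_{p−1} j_{p−1}} = y_{i_p j_{p−1}} + k(i_{p−1}, i_p)} if j_{p−1} = j_p, and F_p := {y ∈ ℝ^{m₁×m₂} : y_{i_{p−1} j_{p−1}} = y_{i_{p−1}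 j_p} − l(j_{p−1}, j_p)} if i_{p−1} = i_p. In other words, the infimum in the paper's definition of the length of a loop of nonzero cost, taken over configurations in a bounded region, is strictly positive. -/
/-!
Along a single step of the loop the constraint `y⁽ᵖ⁾ ∈ F_p` says that `y⁽ᵖ⁾` jumps by exactly the step
cost between the entries at `(i_{p−1}, j_{p−1})` and `(i_p, j_p)`. Summing over the loop, the jumps
add up to the total cost `C`, while the entries `y⁽ᵖ⁾_{i_p j_p}` themselves telescope away, so `C` is
a sum of entries of the increments `y⁽ᵖ⁾ − y⁽ᵖ⁻¹⁾`. Cauchy–Schwarz then gives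
`C² ≤ N Σ_p |y⁽ᵖ⁾ − y⁽ᵖ⁻¹⁾|²`, so `ε = C² / N` works for every `R`.
-/

open Finset

lemma Finset.sum_Icc_one_sub_pred {G : Type*} [AddCommGroup G] (f : ℕ → G) (N : ℕ) :
    ∑ p ∈ Icc 1 N, (f p - f (p - 1)) = f N - f 0 := by
  induction N with
  | zero => simp
  | succ N ih =>
    rw [sum_Icc_succ_top (by omega), ih, Nat.add_sub_cancel]
    abel

lemma jump_eq_cost {α β : Type*} (k : α → α → ℝ) (l : β → β → ℝ)
    (hk0 : ∀ a, k a a = 0) (hl0 : ∀ b, l b b = 0) (y : α × β → ℝ) {i i' : α} {j j' : β}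
    (hstep : i = i' ∨ j = j')
    (hrow : j = j' → y (i, j) = y (i', j) + k i i')
    (hcol : i = i' → y (i, j) = y (i, j') - l j j') :
    y (i, j) - y (i', j') = k i i' - l j j' := by
  rcases hstep with rfl | rfl
  · linarith [hcol rfl, hk0 i]
  · linarith [hrow rfl, hl0 j]

section Loop

variable {ι : Type*} (y : ℕ → EuclideanSpace ℝ ι) (a : ℕ → ι) (N : ℕ)

lemma sum_jump_eq_sum_increment_apply (hy : y 0 = y N) (ha : a N = a 0) :
    ∑ p ∈ Icc 1 N, (y p (a (p - 1)) - y p (a p))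
      = ∑ p ∈ Icc 1 N, (y p - y (p - 1)) (a (p - 1)) := by
  have htel : ∑ p ∈ Icc 1 N, (y p (a p) - y (p - 1) (a (p - 1))) = 0 := by
    rw [sum_Icc_one_sub_pred (fun p => y p (a p)), hy, ha, sub_self]
  rw [← sub_zero (∑ p ∈ Icc 1 N, (y p - y (p - 1)) (a (p - 1))), ← htel, ← sum_sub_distrib]
  refine sum_congr rfl fun p _ => ?_
  simp only [PiLp.sub_apply]
  ring

lemma sq_sum_jump_le_card_mul_sum_sq_norm [Fintype ι] (hy : y 0 = y N) (ha : a N = a 0) :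
    (∑ p ∈ Icc 1 N, (y p (a (p - 1)) - y p (a p))) ^ 2
      ≤ N * ∑ p ∈ Icc 1 N, ‖y p - y (p - 1)‖ ^ 2 := by
  have habs : |∑ p ∈ Icc 1 N, (y p (a (p - 1)) - y p (a p))|
      ≤ ∑ p ∈ Icc 1 N, ‖y p - y (p - 1)‖ := by
    rw [sum_jump_eq_sum_increment_apply y a N hy ha]
    refine (abs_sum_le_sum_abs _ _).trans (sum_le_sum fun p _ => ?_)
    rw [← Real.norm_eq_abs]
    exact PiLp.norm_apply_le _ _
  calc _ ≤ (∑ p ∈ Icc 1 N, ‖y p - y (p - 1)‖) ^ 2 :=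
        sq_le_sq' (neg_le_of_abs_le habs) (le_of_abs_le habs)
    _ ≤ #(Icc 1 N) * ∑ p ∈ Icc 1 N, ‖y p - y (p - 1)‖ ^ 2 := sq_sum_le_card_mul_sum_sq
    _ = N * ∑ p ∈ Icc 1 N, ‖y p - y (p - 1)‖ ^ 2 := by rw [Nat.card_Icc, Nat.add_sub_cancel]

end Loop

theorem loop_length_pos_general
    (m₁ m₂ : ℕ)
    (k : Fin m₁ → Fin m₁ → ℝ) (l : Fin m₂ → Fin m₂ → ℝ)
    (hk0 : ∀ i, k i i = 0) (hl0 : ∀ j, l j j = 0)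
    (N : ℕ) (hN : 1 ≤ N) (i : ℕ → Fin m₁) (j : ℕ → Fin m₂)
    (hclose : i N = i 0 ∧ j N = j 0)
    (hstep : ∀ p, 1 ≤ p → p ≤ N → i (p - 1) = i p ∨ j (p - 1) = j p)
    (hcost : ∑ p ∈ Finset.Icc 1 N, (k (i (p - 1)) (i p) - l (j (p - 1)) (j p)) ≠ 0) :
    ∀ R : ℝ, 0 < R → ∃ ε : ℝ, 0 < ε ∧
      ∀ y : ℕ → EuclideanSpace ℝ (Fin m₁ × Fin m₂),
        y 0 = y N →
        (∀ p, 1 ≤ p → p ≤ N → ‖y p‖ ≤ R) →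
        (∀ p, 1 ≤ p → p ≤ N →
          (j (p - 1) = j p →
            y p (i (p - 1), j (p - 1)) = y p (i p, j (p - 1)) + k (i (p - 1)) (i p)) ∧
          (i (p - 1) = i p →
            y p (i (p - 1), j (p - 1)) = y p (i (p - 1), j p) - l (j (p - 1)) (j p))) →
        ε ≤ ∑ p ∈ Finset.Icc 1 N, ‖y p - y (p - 1)‖ ^ 2 := by
  intro R _
  set C := ∑ p ∈ Icc 1 N, (k (i (p - 1)) (i p) - l (j (p - 1)) (j p))
  have hNpos : (0 : ℝ) < N := by exact_mod_cast hN
  refine ⟨C ^ 2 / N, by positivity, fun y hy _ hF => ?_⟩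
  have hjump : ∑ p ∈ Icc 1 N, (y p (i (p - 1), j (p - 1)) - y p (i p, j p)) = C := by
    refine sum_congr rfl fun p hp => ?_
    obtain ⟨hp1, hpN⟩ := mem_Icc.mp hp
    exact jump_eq_cost k l hk0 hl0 (y p) (hstep p hp1 hpN) (hF p hp1 hpN).1 (hF p hp1 hpN).2
  rw [div_le_iff₀' hNpos, ← hjump]
  exact sq_sum_jump_le_card_mul_sum_sq_norm y (fun p => (i p, j p)) N hy
    (Prod.ext hclose.1 hclose.2)

/-- For a loop `{(i_p, j_p)}_{p=0}^N` of nonzero total cost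
`Σ_{p=1}^N [k(i_{p−1},i_p) − l(j_{p−1},j_p)]`, and any radius `R > 0`, the
squared length `Σ_{p=1}^N |y⁽ᵖ⁾ − y⁽ᵖ⁻¹⁾|²` of any configuration of matrices
`y⁽ᵖ⁾` with `|y⁽ᵖ⁾| ≤ R` and `y⁽ᵖ⁾ ∈ F_p` (with `y⁽⁰⁾ := y⁽ᴺ⁾`) is bounded
below by some `ε > 0`. -/
theorem loop_length_pos
    (m₁ m₂ : ℕ) (hm₁ : 1 ≤ m₁) (hm₂ : 1 ≤ m₂)
    (k : Fin m₁ → Fin m₁ → ℝ) (l : Fin m₂ → Fin m₂ → ℝ)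
    (hk0 : ∀ i, k i i = 0) (hl0 : ∀ j, l j j = 0)
    (N : ℕ) (hN : 1 ≤ N) (i : ℕ → Fin m₁) (j : ℕ → Fin m₂)
    (hclose : i N = i 0 ∧ j N = j 0)
    (hstep : ∀ p, 1 ≤ p → p ≤ N → i (p - 1) = i p ∨ j (p - 1) = j p)
    (hcost : ∑ p ∈ Finset.Icc 1 N, (k (i (p - 1)) (i p) - l (j (p - 1)) (j p)) ≠ 0) :
    ∀ R : ℝ, 0 < R → ∃ ε : ℝ, 0 < ε ∧
      ∀ y : ℕ → EuclideanSpace ℝ (Fin m₁ × Fin m₂),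
        y 0 = y N →
        (∀ p, 1 ≤ p → p ≤ N → ‖y p‖ ≤ R) →
        (∀ p, 1 ≤ p → p ≤ N →
          (j (p - 1) = j p →
            y p (i (p - 1), j (p - 1)) = y p (i p, j (p - 1)) + k (i (p - 1)) (i p)) ∧
          (i (p - 1) = i p →
            y p (i (p - 1), j (p - 1)) = y p (i (p - 1), j p) - l (j (p - 1)) (j p))) →
        ε ≤ ∑ p ∈ Finset.Icc 1 N, ‖y p - y (p - 1)‖ ^ 2 :=
  loop_length_pos_general m₁ m₂ k l hk0 hl0 N hN i j hclose hstep hcost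
end
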